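/- arXiv:2302.14230 — 3 statements merged into one kernel-verified Lean document; each statement's English description precedes it below -/
import Mathlib

section
/- Let g : (0,1) → (0,∞) be integrable, let h : (0,1) → (0,∞) be strictly increasing, and for d ≥ 0 define g_d(x) = g(x) exp(−d h(x)) and F_d(a) = ∫₀^a g_d(x) dx / ∫₀^1 g_d(x) dx. Then for every a ∈ (0,1) and every d > 0, F_d is strictly increasing in d; in particular F_d(a) > F_0(a) for all d > 0. -/
/-!
Write `d₂ = d₁ + δ` with `δ > 0`. Then `g_{d₂} = g_{d₁} · φ` with `φ = exp (-δ h)`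
strictly decreasing, so on `(0,a)` the factor `φ` exceeds `φ(a)` and on `(a,1)` it is
below `φ(a)`. Hence passing from `g_{d₁}` to `g_{d₂}` multiplies the mass left of `a` by
more than `φ(a)` and the mass right of `a` by less, which raises the left share `F_d(a)`.
-/

open Set MeasureTheory

lemma div_add_lt_div_add_of_mul_lt_of_lt_mul {A B A' B' c : ℝ} (hA : 0 < A) (hB : 0 < B)
    (hS' : 0 < A' + B') (hA' : c * A < A') (hB' : B' < c * B) :
    A / (A + B) < A' / (A' + B') := by
  rw [div_lt_div_iff₀ (by positivity) hS']
  nlinarith [mul_lt_mul_of_pos_left hB' hA, mul_lt_mul_of_pos_right hA' hB]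

section SetIntegral

variable {α : Type*} [MeasurableSpace α] {μ : Measure α} {s : Set α} {f g : α → ℝ}

lemma setIntegral_pos_of_forall_pos (hs : MeasurableSet s) (hμs : μ s ≠ 0)
    (hf : IntegrableOn f s μ) (hpos : ∀ x ∈ s, 0 < f x) : 0 < ∫ x in s, f x ∂μ := by
  rw [setIntegral_pos_iff_support_of_nonneg_ae
    (ae_restrict_of_forall_mem hs fun x hx => (hpos x hx).le) hf]
  exact (pos_iff_ne_zero.2 hμs).trans_le (measure_mono fun x hx => ⟨(hpos x hx).ne', hx⟩)

lemma setIntegral_lt_setIntegral_of_forall_lt (hs : MeasurableSet s) (hμs : μ s ≠ 0)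
    (hf : IntegrableOn f s μ) (hg : IntegrableOn g s μ) (hlt : ∀ x ∈ s, f x < g x) :
    ∫ x in s, f x ∂μ < ∫ x in s, g x ∂μ := by
  have : 0 < ∫ x in s, (g x - f x) ∂μ :=
    setIntegral_pos_of_forall_pos hs hμs (hg.sub hf) fun x hx => sub_pos.2 (hlt x hx)
  rwa [integral_sub hg hf, sub_pos] at this

lemma integrableOn_mul_exp_neg_mul {h : α → ℝ} {d : ℝ} (hs : MeasurableSet s)
    (hg : IntegrableOn g s μ) (hh : AEMeasurable h (μ.restrict s))
    (hh_nonneg : ∀ x ∈ s, 0 ≤ h x) (hd : 0 ≤ d) :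
    IntegrableOn (fun x => g x * Real.exp (-d * h x)) s μ := by
  refine Integrable.mono hg (hg.aestronglyMeasurable.mul
    (Real.measurable_exp.comp_aemeasurable (hh.const_mul (-d))).aestronglyMeasurable) ?_
  refine ae_restrict_of_forall_mem hs fun x hx => ?_
  have hexp : Real.exp (-d * h x) ≤ 1 :=
    Real.exp_le_one_iff.2 (by nlinarith [hh_nonneg x hx])
  rw [norm_mul, Real.norm_of_nonneg (Real.exp_pos _).le]
  exact mul_le_of_le_one_right (norm_nonneg _) hexp

end SetIntegral

lemma setIntegral_Ioo_eq_add {f : ℝ → ℝ} {l a r : ℝ} (ha : a ∈ Ioo l r)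
    (hf : IntegrableOn f (Ioo l r)) :
    ∫ x in Ioo l r, f x = (∫ x in Ioo l a, f x) + ∫ x in Ioo a r, f x := by
  rw [← Ioo_union_Ico_eq_Ioo ha.1 ha.2.le,
    setIntegral_union (Ico_disjoint_Ico_same.mono_left Ioo_subset_Ico_self) measurableSet_Ico
      (hf.mono_set (Ioo_subset_Ioo_right ha.2.le)) (hf.mono_set (Ico_subset_Ioo_left ha.1)),
    integral_Ico_eq_integral_Ioo]

theorem setIntegral_Ioo_div_lt_of_strictAntiOn {G φ : ℝ → ℝ} {l a r : ℝ}
    (ha : a ∈ Ioo l r) (hG_pos : ∀ x ∈ Ioo l r, 0 < G x)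
    (hφ_pos : ∀ x ∈ Ioo l r, 0 < φ x) (hφ : StrictAntiOn φ (Ioo l r))
    (hG : IntegrableOn G (Ioo l r))
    (hGφ : IntegrableOn (fun x => G x * φ x) (Ioo l r)) :
    (∫ x in Ioo l a, G x) / (∫ x in Ioo l r, G x) <
      (∫ x in Ioo l a, G x * φ x) / ∫ x in Ioo l r, G x * φ x := by
  have hleft : Ioo l a ⊆ Ioo l r := Ioo_subset_Ioo_right ha.2.le
  have hright : Ioo a r ⊆ Ioo l r := Ioo_subset_Ioo_left ha.1.le
  have hvol_left : volume (Ioo l a) ≠ 0 := by simp [ha.1]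
  have hvol_right : volume (Ioo a r) ≠ 0 := by simp [ha.2]
  have hGφ_pos : 0 < ∫ x in Ioo l r, G x * φ x :=
    setIntegral_pos_of_forall_pos measurableSet_Ioo (by simp [ha.1.trans ha.2]) hGφ
      fun x hx => mul_pos (hG_pos x hx) (hφ_pos x hx)
  have hmass_left : φ a * ∫ x in Ioo l a, G x < ∫ x in Ioo l a, G x * φ x := by
    rw [← integral_const_mul]
    refine setIntegral_lt_setIntegral_of_forall_lt measurableSet_Ioo hvol_left
      ((hG.mono_set hleft).const_mul _) (hGφ.mono_set hleft) fun x hx => ?_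
    rw [mul_comm]
    exact mul_lt_mul_of_pos_left (hφ (hleft hx) ha hx.2) (hG_pos x (hleft hx))
  have hmass_right : ∫ x in Ioo a r, G x * φ x < φ a * ∫ x in Ioo a r, G x := by
    rw [← integral_const_mul]
    refine setIntegral_lt_setIntegral_of_forall_lt measurableSet_Ioo hvol_right
      (hGφ.mono_set hright) ((hG.mono_set hright).const_mul _) fun x hx => ?_
    rw [mul_comm (φ a)]
    exact mul_lt_mul_of_pos_left (hφ ha (hright hx) hx.1) (hG_pos x (hright hx))
  rw [setIntegral_Ioo_eq_add ha hGφ] at hGφ_pos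
  rw [setIntegral_Ioo_eq_add ha hG, setIntegral_Ioo_eq_add ha hGφ]
  exact div_add_lt_div_add_of_mul_lt_of_lt_mul
    (setIntegral_pos_of_forall_pos measurableSet_Ioo hvol_left (hG.mono_set hleft)
      fun x hx => hG_pos x (hleft hx))
    (setIntegral_pos_of_forall_pos measurableSet_Ioo hvol_right (hG.mono_set hright)
      fun x hx => hG_pos x (hright hx))
    hGφ_pos hmass_left hmass_right

/-- For a positive integrable `g` on `(0,1)` and a positive strictly increasing `h`, with
`g_d(x) = g(x) exp(−d h(x))` and `F_d(a) = ∫₀^a g_d / ∫₀^1 g_d`, the map `d ↦ F_d(a)` is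
strictly increasing on `[0,∞)` for every `a ∈ (0,1)`; in particular `F_d(a) > F_0(a)` for
all `d > 0`. -/
theorem Fd_strictMono_in_d
    (g h : ℝ → ℝ)
    (hg_pos : ∀ x ∈ Set.Ioo (0 : ℝ) 1, 0 < g x)
    (hg_int : IntegrableOn g (Set.Ioo (0 : ℝ) 1))
    (hh_pos : ∀ x ∈ Set.Ioo (0 : ℝ) 1, 0 < h x)
    (hh_mono : StrictMonoOn h (Set.Ioo (0 : ℝ) 1))
    (F : ℝ → ℝ → ℝ)
    (hF : ∀ d a, F d a =
      (∫ x in Set.Ioo (0 : ℝ) a, g x * Real.exp (-d * h x)) /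
      (∫ x in Set.Ioo (0 : ℝ) 1, g x * Real.exp (-d * h x))) :
    ∀ a ∈ Set.Ioo (0 : ℝ) 1,
      StrictMonoOn (fun d => F d a) (Set.Ici (0 : ℝ)) ∧
      ∀ d > (0 : ℝ), F 0 a < F d a := by
  intro a ha
  have hh_meas : AEMeasurable h (volume.restrict (Ioo 0 1)) :=
    aemeasurable_restrict_of_monotoneOn measurableSet_Ioo hh_mono.monotoneOn
  have hgd_int (d : ℝ) (hd : 0 ≤ d) :
      IntegrableOn (fun x => g x * Real.exp (-d * h x)) (Ioo 0 1) :=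
    integrableOn_mul_exp_neg_mul measurableSet_Ioo hg_int hh_meas
      (fun x hx => (hh_pos x hx).le) hd
  have hmono : StrictMonoOn (fun d => F d a) (Ici 0) := by
    intro d₁ (hd₁ : 0 ≤ d₁) d₂ _ hd
    have htilt : ∀ x, g x * Real.exp (-d₂ * h x) =
        g x * Real.exp (-d₁ * h x) * Real.exp (-(d₂ - d₁) * h x) := fun x => by
      rw [mul_assoc, ← Real.exp_add]; ring_nf
    have hφ : StrictAntiOn (fun x => Real.exp (-(d₂ - d₁) * h x)) (Ioo 0 1) :=
      fun x hx y hy hxy => Real.exp_lt_exp.2 <| by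
        nlinarith [hh_mono hx hy hxy, sub_pos.2 hd]
    simp only [hF, htilt]
    refine setIntegral_Ioo_div_lt_of_strictAntiOn ha
      (fun x hx => mul_pos (hg_pos x hx) (Real.exp_pos _)) (fun x _ => Real.exp_pos _) hφ
      (hgd_int d₁ hd₁) ?_
    simpa only [← htilt] using hgd_int d₂ (hd₁.trans hd.le)
  exact ⟨hmono, fun d hd => hmono self_mem_Ici (mem_Ici.2 hd.le) hd⟩
end

section
/- Fix n, n₀, σ², σ₀² > 0 and let d = |ȳ − ȳ₀| denote the difference of the sample means of two normal samples. Let F_d(a₀) be the CDF of the marginal posterior of a₀ under a normalized power prior, which is proportional to π(a₀) sqrt(a₀ r/(1 + a₀ r σ²/σ₀²)) exp(−n a₀ r d²/(2σ₀²(1 + a₀ r σ²/σ₀²))) with r = n₀/n and prior density π > 0 on (0,1). Then for every d > 0 and every a₀ ∈ (0,1), F_d(a₀) > F_0(a₀). -/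
open Set MeasureTheory

set_option maxHeartbeats 1600000 in
/-- Theorem 2.3 (i.i.d. normal case): with `c = σ²/σ₀² > 0`, `K = n r/(2σ₀²) > 0`,
`r = n₀/n > 0` and a positive integrable prior `π` on `(0,1)`, the CDF `F_d` of the marginal
posterior of `a₀` (whose density is proportional to
`π(a₀) sqrt(a₀ r/(1 + a₀ r c)) exp(−K d² a₀/(1 + a₀ r c))`) satisfies
`F_d(a₀) > F_0(a₀)` for every `d > 0` and `a₀ ∈ (0,1)`. -/
theorem npp_normal_cdf_dominates
    (n n₀ σ σ₀ : ℝ) (hn : 0 < n) (hn₀ : 0 < n₀) (hσ : 0 < σ) (hσ₀ : 0 < σ₀)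
    (π : ℝ → ℝ)
    (hπ_pos : ∀ x ∈ Set.Ioo (0 : ℝ) 1, 0 < π x)
    (hπ_int : IntegrableOn π (Set.Ioo (0 : ℝ) 1))
    (r c K : ℝ) (hr : r = n₀ / n) (hc : c = σ ^ 2 / σ₀ ^ 2) (hK : K = n * r / (2 * σ₀ ^ 2))
    (g : ℝ → ℝ → ℝ)
    (hg : ∀ d x, g d x =
      π x * Real.sqrt (x * r / (1 + x * r * c)) *
        Real.exp (-(K * d ^ 2) * (x / (1 + x * r * c))))
    (F : ℝ → ℝ → ℝ)
    (hF : ∀ d a, F d a =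
      (∫ x in Set.Ioo (0 : ℝ) a, g d x) / (∫ x in Set.Ioo (0 : ℝ) 1, g d x)) :
    ∀ d > (0 : ℝ), ∀ a₀ ∈ Set.Ioo (0 : ℝ) 1, F 0 a₀ < F d a₀ := by
  intro d hd a₀ ha₀
  obtain ⟨ha0, ha1⟩ := ha₀
  have hr' : 0 < r := by rw [hr]; positivity
  have hc' : 0 < c := by rw [hc]; positivity
  have hK' : 0 < K := by
    rw [hK]; positivity
  have hKd : 0 < K * d ^ 2 := by positivity
  -- weight function
  set w : ℝ → ℝ → ℝ := fun e x => Real.exp (-(K * e ^ 2) * (x / (1 + x * r * c))) with hw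
  have hdenom : ∀ x : ℝ, 0 < x → (0:ℝ) < 1 + x * r * c := by
    intro x hx; nlinarith [mul_pos (mul_pos hx hr') hc']
  have hfac : ∀ e x, g e x = g 0 x * w e x := by
    intro e x
    simp only [hg, hw]
    rw [show (-(K * 0 ^ 2) * (x / (1 + x * r * c))) = 0 by ring, Real.exp_zero]
    ring
  have hg0pos : ∀ x ∈ Ioo (0:ℝ) 1, 0 < g 0 x := by
    intro x hx
    rw [hg]
    have h1 := hdenom x hx.1
    have harg : 0 < x * r / (1 + x * r * c) := div_pos (mul_pos hx.1 hr') h1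
    have hsq : 0 < Real.sqrt (x * r / (1 + x * r * c)) := Real.sqrt_pos.mpr harg
    have hπx := hπ_pos x hx
    exact mul_pos (mul_pos hπx hsq) (Real.exp_pos _)
  have hwpos : ∀ e x, 0 < w e x := fun e x => Real.exp_pos _
  have hgpos : ∀ e, ∀ x ∈ Ioo (0:ℝ) 1, 0 < g e x := by
    intro e x hx
    rw [hfac]
    exact mul_pos (hg0pos x hx) (hwpos e x)
  -- integrability
  have hmeasφ : ∀ e : ℝ, Measurable (fun x : ℝ =>
      Real.sqrt (x * r / (1 + x * r * c)) *
        Real.exp (-(K * e ^ 2) * (x / (1 + x * r * c)))) := by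
    intro e
    apply Measurable.mul
    · exact Real.continuous_sqrt.measurable.comp ((measurable_id.mul_const r).div
        ((measurable_id.mul_const r).mul_const c |>.const_add 1))
    · exact Real.measurable_exp.comp ((measurable_id.div
        ((measurable_id.mul_const r).mul_const c |>.const_add 1)).const_mul _)
  have hint : ∀ e : ℝ, IntegrableOn (g e) (Ioo (0:ℝ) 1) := by
    intro e
    have hb : ∀ᵐ x ∂(volume.restrict (Ioo (0:ℝ) 1)),
        ‖Real.sqrt (x * r / (1 + x * r * c)) *
          Real.exp (-(K * e ^ 2) * (x / (1 + x * r * c)))‖ ≤ Real.sqrt r := by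
      rw [ae_restrict_iff' measurableSet_Ioo]
      refine Filter.Eventually.of_forall (fun x hx => ?_)
      have h1 := hdenom x hx.1
      have hxr : x * r / (1 + x * r * c) ≤ r := by
        rw [div_le_iff₀ h1]; nlinarith [mul_pos hr' (sub_pos.mpr hx.2), mul_nonneg (mul_nonneg hx.1.le hr'.le) hc'.le]
      have hs : Real.sqrt (x * r / (1 + x * r * c)) ≤ Real.sqrt r := Real.sqrt_le_sqrt hxr
      have he : Real.exp (-(K * e ^ 2) * (x / (1 + x * r * c))) ≤ 1 := by
        apply Real.exp_le_one_iff.mpr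
        have h2 : 0 ≤ K * e ^ 2 := by positivity
        have h3 : 0 ≤ x / (1 + x * r * c) := div_nonneg hx.1.le h1.le
        nlinarith
      rw [Real.norm_eq_abs, abs_of_nonneg (by positivity)]
      calc Real.sqrt (x * r / (1 + x * r * c)) *
            Real.exp (-(K * e ^ 2) * (x / (1 + x * r * c)))
          ≤ Real.sqrt (x * r / (1 + x * r * c)) * 1 :=
            mul_le_mul_of_nonneg_left he (Real.sqrt_nonneg _)
        _ ≤ Real.sqrt r := by rw [mul_one]; exact hs
    have h2 := Integrable.bdd_mul (c := Real.sqrt r) hπ_int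
      ((hmeasφ e).aestronglyMeasurable) hb
    refine h2.congr (Filter.Eventually.of_forall (fun x => ?_))
    rw [hg]; ring
  have hintA : ∀ e, IntegrableOn (g e) (Ioo (0:ℝ) a₀) :=
    fun e => (hint e).mono_set (Ioo_subset_Ioo le_rfl ha1.le)
  have hintB : ∀ e, IntegrableOn (g e) (Ioo a₀ 1) :=
    fun e => (hint e).mono_set (Ioo_subset_Ioo ha0.le le_rfl)
  -- splitting
  have hsplit : ∀ e, (∫ x in Ioo (0:ℝ) 1, g e x)
      = (∫ x in Ioo 0 a₀, g e x) + ∫ x in Ioo a₀ 1, g e x := by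
    intro e
    have hu : Ioo (0:ℝ) a₀ ∪ Ico a₀ 1 = Ioo 0 1 := Ioo_union_Ico_eq_Ioo ha0 ha1.le
    have hdisj : Disjoint (Ioo (0:ℝ) a₀) (Ico a₀ 1) := by
      rw [Set.disjoint_left]
      intro x hx hx'
      exact absurd hx.2 (not_lt.mpr hx'.1)
    rw [← hu, setIntegral_union hdisj measurableSet_Ico (hintA e)
      (((hint e).mono_set (Ico_subset_Ioo_left ha0)).mono_set
        (by intro x hx; exact ⟨hx.1, hx.2⟩)),
      integral_Ico_eq_integral_Ioo]
  -- positivity of integrals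
  have hposint : ∀ (f : ℝ → ℝ) (u v : ℝ), u < v → Ioo u v ⊆ Ioo (0:ℝ) 1 →
      IntegrableOn f (Ioo u v) → (∀ x ∈ Ioo u v, 0 < f x) → 0 < ∫ x in Ioo u v, f x := by
    intro f u v huv hsub hfi hfpos
    have h0 : 0 ≤ᵐ[volume.restrict (Ioo u v)] f := by
      filter_upwards [ae_restrict_mem measurableSet_Ioo] with x hx
      exact (hfpos x hx).le
    rw [setIntegral_pos_iff_support_of_nonneg_ae h0 hfi]
    refine lt_of_lt_of_le ?_ (measure_mono (fun x hx => ⟨(hfpos x hx).ne', hx⟩))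
    rw [Real.volume_Ioo]
    simp [huv, sub_pos.mpr huv]
  have hsubA : Ioo (0:ℝ) a₀ ⊆ Ioo (0:ℝ) 1 := Ioo_subset_Ioo le_rfl ha1.le
  have hsubB : Ioo a₀ (1:ℝ) ⊆ Ioo (0:ℝ) 1 := Ioo_subset_Ioo ha0.le le_rfl
  have hA0 : 0 < ∫ x in Ioo (0:ℝ) a₀, g 0 x :=
    hposint _ _ _ ha0 hsubA (hintA 0) (fun x hx => hgpos 0 x (hsubA hx))
  have hB0 : 0 < ∫ x in Ioo a₀ (1:ℝ), g 0 x :=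
    hposint _ _ _ ha1 hsubB (hintB 0) (fun x hx => hgpos 0 x (hsubB hx))
  have hAd : 0 < ∫ x in Ioo (0:ℝ) a₀, g d x :=
    hposint _ _ _ ha0 hsubA (hintA d) (fun x hx => hgpos d x (hsubA hx))
  have hBd : 0 < ∫ x in Ioo a₀ (1:ℝ), g d x :=
    hposint _ _ _ ha1 hsubB (hintB d) (fun x hx => hgpos d x (hsubB hx))
  set wa : ℝ := Real.exp (-(K * d ^ 2) * (a₀ / (1 + a₀ * r * c))) with hwa
  have hwa_eq : w d a₀ = wa := rfl
  have hwmono : ∀ x y : ℝ, 0 < x → x < y → w d y < w d x := by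
    intro x y hx hxy
    apply Real.exp_lt_exp.mpr
    have hdx := hdenom x hx
    have hdy := hdenom y (hx.trans hxy)
    have hlt : x / (1 + x * r * c) < y / (1 + y * r * c) := by
      rw [div_lt_div_iff₀ hdx hdy]; nlinarith
    nlinarith
  -- strict inequality on (0, a₀)
  have hkey : wa * ∫ x in Ioo (0:ℝ) a₀, g 0 x < ∫ x in Ioo (0:ℝ) a₀, g d x := by
    have hsub : 0 < ∫ x in Ioo (0:ℝ) a₀, (g d x - wa * g 0 x) := by
      refine hposint _ _ _ ha0 hsubA ((hintA d).sub ((hintA 0).const_mul wa)) ?_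
      intro x hx
      have hx01 : x ∈ Ioo (0:ℝ) 1 := hsubA hx
      have h1 : wa < w d x := by rw [← hwa_eq]; exact hwmono x a₀ hx.1 hx.2
      have h2 := hg0pos x hx01
      have h3 := hfac d x
      nlinarith [mul_lt_mul_of_pos_left h1 h2]
    rw [integral_sub (hintA d) ((hintA 0).const_mul wa), integral_const_mul] at hsub
    linarith
  -- non-strict inequality on (a₀, 1)
  have hkey2 : (∫ x in Ioo a₀ (1:ℝ), g d x) ≤ wa * ∫ x in Ioo a₀ (1:ℝ), g 0 x := by
    have h1 : (∫ x in Ioo a₀ (1:ℝ), g d x) ≤ ∫ x in Ioo a₀ (1:ℝ), wa * g 0 x := by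
      refine setIntegral_mono_on (hintB d) ((hintB 0).const_mul wa)
        measurableSet_Ioo (fun x hx => ?_)
      have hx01 : x ∈ Ioo (0:ℝ) 1 := hsubB hx
      have hle : w d x ≤ wa := by rw [← hwa_eq]; exact (hwmono a₀ x ha0 hx.1).le
      have h2 := hg0pos x hx01
      rw [hfac d x]
      nlinarith
    rwa [integral_const_mul] at h1
  -- conclude
  rw [hF, hF, hsplit d, hsplit 0]
  rw [div_lt_div_iff₀ (by linarith) (by linarith)]
  nlinarith [mul_lt_mul_of_pos_right hkey hB0, mul_le_mul_of_nonneg_left hkey2 hA0.le,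
    mul_pos hAd hB0, Real.exp_pos (-(K * d ^ 2) * (a₀ / (1 + a₀ * r * c)))]
end

section
/- Under the hypotheses of the previous statement, the marginal posterior of a₀, given by π_n(a₀) ∝ a₀^{α₀−1}(1−a₀)^{β₀−1} f(a₀) e^{−n h(a₀)} on (0,1), converges to a point mass at zero: for every ε > 0, ∫₀^ε π_n(a₀) da₀ / ∫₀^1 π_n(a₀) da₀ → 1 as n → ∞. -/
open Set MeasureTheory Filter

private lemma aux_rpow_le {t c d : ℝ} (hc : 0 < c) (hct : c ≤ t) (ht1 : t ≤ 1) :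
    t ^ d ≤ max (c ^ d) 1 := by
  rcases le_or_gt 0 d with hd | hd
  · exact (Real.rpow_le_one (by linarith) ht1 hd).trans (le_max_right _ _)
  · exact (Real.rpow_le_rpow_of_nonpos hc hct hd.le).trans (le_max_left _ _)

private lemma aux_rpow_intOn {r : ℝ} (hr : -1 < r) {b : ℝ} (hb : 0 < b) :
    IntegrableOn (fun x : ℝ => x ^ r) (Ioo (0:ℝ) b) := by
  have h := intervalIntegral.intervalIntegrable_rpow' (r := r) (a := 0) (b := b) hr
  rw [intervalIntegrable_iff_integrableOn_Ioc_of_le hb.le] at h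
  exact h.mono_set Ioo_subset_Ioc_self

private lemma aux_rpow_intOn' {r : ℝ} (hr : -1 < r) :
    IntegrableOn (fun x : ℝ => (1 - x) ^ r) (Ioo (1/2 : ℝ) 1) := by
  have h := (intervalIntegral.intervalIntegrable_rpow' (r := r) (a := 0) (b := 1/2) hr).comp_sub_left 1
  have h2 : (1:ℝ) - 0 = 1 := by norm_num
  rw [show (1:ℝ) - 1/2 = 1/2 by norm_num, h2] at h
  replace h := h.symm
  rw [intervalIntegrable_iff_integrableOn_Ioc_of_le (by norm_num)] at h
  exact h.mono_set Ioo_subset_Ioc_self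

private lemma beta_integrable {a b : ℝ} (ha : 0 < a) (hb : 0 < b) :
    IntegrableOn (fun x : ℝ => x ^ (a-1) * (1-x) ^ (b-1)) (Ioo (0:ℝ) 1) := by
  have hcont : ContinuousOn (fun x : ℝ => x ^ (a-1) * (1-x) ^ (b-1)) (Ioo (0:ℝ) 1) := by
    intro x hx
    exact ((Real.continuousAt_rpow_const x _ (Or.inl (ne_of_gt hx.1))).continuousWithinAt.mul
      (((Real.continuousAt_rpow_const (1-x) _ (Or.inl (by
        have := hx.2; intro hh; linarith [hh]))).comp
        (by continuity : Continuous (fun x : ℝ => 1 - x)).continuousAt).continuousWithinAt))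
  have hsub : Ioo (0:ℝ) 1 ⊆ Ioo (0:ℝ) (2/3) ∪ Ioo (1/2:ℝ) 1 := by
    intro x hx
    rcases lt_or_ge x (2/3 : ℝ) with hh | hh
    · exact Or.inl ⟨hx.1, hh⟩
    · exact Or.inr ⟨by linarith, hx.2⟩
  have hleft : IntegrableOn (fun x : ℝ => x ^ (a-1) * (1-x) ^ (b-1)) (Ioo (0:ℝ) (2/3)) := by
    have hint : IntegrableOn (fun x : ℝ => max ((1/3:ℝ) ^ (b-1)) 1 * x ^ (a-1)) (Ioo (0:ℝ) (2/3)) :=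
      (aux_rpow_intOn (by linarith) (by norm_num)).const_mul _
    refine Integrable.mono hint ((hcont.mono (by intro x hx; exact ⟨hx.1, by linarith [hx.2]⟩)).aestronglyMeasurable measurableSet_Ioo) ?_
    rw [ae_restrict_iff' measurableSet_Ioo]
    filter_upwards with x hx
    have hx0 : (0:ℝ) < x := hx.1
    have h1x : (1/3:ℝ) ≤ 1 - x := by linarith [hx.2]
    have h1x1 : (1:ℝ) - x ≤ 1 := by linarith
    have hb1 : (1-x) ^ (b-1) ≤ max ((1/3:ℝ) ^ (b-1)) 1 := aux_rpow_le (by norm_num) h1x h1x1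
    have hxr : (0:ℝ) ≤ x ^ (a-1) := Real.rpow_nonneg hx0.le _
    have h1xr : (0:ℝ) ≤ (1-x) ^ (b-1) := Real.rpow_nonneg (by linarith) _
    rw [Real.norm_eq_abs, Real.norm_eq_abs, abs_of_nonneg (mul_nonneg hxr h1xr),
      abs_of_nonneg (mul_nonneg (le_trans h1xr hb1) hxr)]
    calc x ^ (a-1) * (1-x) ^ (b-1) ≤ x ^ (a-1) * max ((1/3:ℝ) ^ (b-1)) 1 :=
          mul_le_mul_of_nonneg_left hb1 hxr
      _ = max ((1/3:ℝ) ^ (b-1)) 1 * x ^ (a-1) := mul_comm _ _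
  have hright : IntegrableOn (fun x : ℝ => x ^ (a-1) * (1-x) ^ (b-1)) (Ioo (1/2:ℝ) 1) := by
    have hint : IntegrableOn (fun x : ℝ => max ((1/2:ℝ) ^ (a-1)) 1 * (1-x) ^ (b-1)) (Ioo (1/2:ℝ) 1) :=
      (aux_rpow_intOn' (by linarith)).const_mul _
    refine Integrable.mono hint ((hcont.mono (by intro x hx; exact ⟨by linarith [hx.1], hx.2⟩)).aestronglyMeasurable measurableSet_Ioo) ?_
    rw [ae_restrict_iff' measurableSet_Ioo]
    filter_upwards with x hx
    have hx0 : (0:ℝ) < 1 - x := by linarith [hx.2]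
    have ha1 : x ^ (a-1) ≤ max ((1/2:ℝ) ^ (a-1)) 1 := aux_rpow_le (by norm_num) hx.1.le (by linarith [hx.2])
    have hxr : (0:ℝ) ≤ x ^ (a-1) := Real.rpow_nonneg (by linarith [hx.1]) _
    have h1xr : (0:ℝ) ≤ (1-x) ^ (b-1) := Real.rpow_nonneg hx0.le _
    rw [Real.norm_eq_abs, Real.norm_eq_abs, abs_of_nonneg (mul_nonneg hxr h1xr),
      abs_of_nonneg (mul_nonneg (le_trans hxr ha1) h1xr)]
    exact mul_le_mul_of_nonneg_right ha1 h1xr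
  exact ((hleft.union hright).mono_set hsub)

private lemma main_integrable {a b : ℝ} (ha : 0 < a) (hb : 0 < b) {φ : ℝ → ℝ}
    (hφ : ContinuousOn φ (Icc (0:ℝ) 1)) :
    IntegrableOn (fun x : ℝ => x ^ (a-1) * (1-x) ^ (b-1) * φ x) (Ioo (0:ℝ) 1) := by
  obtain ⟨M, hM⟩ := (isCompact_Icc (a := (0:ℝ)) (b := 1)).exists_bound_of_continuousOn hφ
  have hM0 : 0 ≤ M := le_trans (norm_nonneg _) (hM 0 (by norm_num))
  have hint : IntegrableOn (fun x : ℝ => M * (x ^ (a-1) * (1-x) ^ (b-1))) (Ioo (0:ℝ) 1) :=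
    (beta_integrable ha hb).const_mul _
  have hcont : ContinuousOn (fun x : ℝ => x ^ (a-1) * (1-x) ^ (b-1) * φ x) (Ioo (0:ℝ) 1) := by
    intro x hx
    refine ContinuousWithinAt.mul (ContinuousWithinAt.mul ?_ ?_) ((hφ x (Ioo_subset_Icc_self hx)).mono Ioo_subset_Icc_self)
    · exact (Real.continuousAt_rpow_const x _ (Or.inl (ne_of_gt hx.1))).continuousWithinAt
    · exact ((Real.continuousAt_rpow_const (1-x) _ (Or.inl (by intro hh; linarith [hx.2]))).comp
        (by continuity : Continuous (fun x : ℝ => 1 - x)).continuousAt).continuousWithinAt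
  refine Integrable.mono hint (hcont.aestronglyMeasurable measurableSet_Ioo) ?_
  rw [ae_restrict_iff' measurableSet_Ioo]
  filter_upwards with x hx
  have hxr : (0:ℝ) ≤ x ^ (a-1) := Real.rpow_nonneg hx.1.le _
  have h1xr : (0:ℝ) ≤ (1-x) ^ (b-1) := Real.rpow_nonneg (by linarith [hx.2]) _
  rw [Real.norm_eq_abs, Real.norm_eq_abs, abs_mul,
    abs_of_nonneg (mul_nonneg hxr h1xr), abs_of_nonneg (mul_nonneg hM0 (mul_nonneg hxr h1xr))]
  calc x ^ (a-1) * (1-x) ^ (b-1) * |φ x| ≤ x ^ (a-1) * (1-x) ^ (b-1) * M := by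
        refine mul_le_mul_of_nonneg_left ?_ (mul_nonneg hxr h1xr)
        simpa [Real.norm_eq_abs] using hM x (Ioo_subset_Icc_self hx)
    _ = M * (x ^ (a-1) * (1-x) ^ (b-1)) := by ring

private lemma setIntegral_pos_aux {F : ℝ → ℝ} {u v : ℝ} (huv : u < v)
    (hint : IntegrableOn F (Ioo u v)) (hFpos : ∀ x ∈ Ioo u v, 0 < F x) :
    0 < ∫ x in Ioo u v, F x := by
  have hnn : 0 ≤ᵐ[volume.restrict (Ioo u v)] F :=
    (ae_restrict_iff' measurableSet_Ioo).mpr (Eventually.of_forall (fun x hx => (hFpos x hx).le))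
  rw [setIntegral_pos_iff_support_of_nonneg_ae hnn hint]
  have : Ioo u v ⊆ Function.support F ∩ Ioo u v := fun x hx => ⟨ne_of_gt (hFpos x hx), hx⟩
  calc (0:ENNReal) < volume (Ioo u v) := by simp [Real.volume_Ioo, huv]
    _ ≤ volume (Function.support F ∩ Ioo u v) := measure_mono this

/-- Abstract form of Theorem 2.1: the marginal posterior of `a₀`, with unnormalized kernel
`π_n(a₀) = a₀^{α₀−1}(1−a₀)^{β₀−1} f(a₀) e^{−n h(a₀)}` on `(0,1)`, converges to a point mass
at zero: for every `ε > 0`, `∫₀^ε π_n / ∫₀^1 π_n → 1` as `n → ∞`.  (Since the posterior is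
supported on `(0,1)`, the numerator integral is taken over `(0, min ε 1)`.) -/
theorem posterior_concentrates_at_zero
    (α₀ β₀ : ℝ) (hα : 0 < α₀) (hβ : 0 < β₀)
    (f h h' : ℝ → ℝ)
    (hf_cont : ContinuousOn f (Set.Icc (0 : ℝ) 1))
    (hf_pos : ∀ x ∈ Set.Icc (0 : ℝ) 1, 0 < f x)
    (hderiv : ∀ x ∈ Set.Icc (0 : ℝ) 1, HasDerivAt h (h' x) x)
    (hh'_cont : ContinuousOn h' (Set.Icc (0 : ℝ) 1))
    (hh'_pos : ∀ x ∈ Set.Ioo (0 : ℝ) 1, 0 < h' x)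
    (hh0 : h 0 = 0) :
    ∀ ε > (0 : ℝ),
      Filter.Tendsto
        (fun n : ℕ =>
          (∫ x in Set.Ioo (0 : ℝ) (min ε 1),
              x ^ (α₀ - 1) * (1 - x) ^ (β₀ - 1) * f x * Real.exp (-(n : ℝ) * h x)) /
          (∫ x in Set.Ioo (0 : ℝ) 1,
              x ^ (α₀ - 1) * (1 - x) ^ (β₀ - 1) * f x * Real.exp (-(n : ℝ) * h x)))
        Filter.atTop (nhds 1) := by
  have hh_cont : ContinuousOn h (Icc (0:ℝ) 1) := fun x hx =>
    (hderiv x hx).continuousAt.continuousWithinAt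
  have hmono : StrictMonoOn h (Icc (0:ℝ) 1) := by
    apply strictMonoOn_of_deriv_pos (convex_Icc 0 1) hh_cont
    intro x hx
    rw [interior_Icc] at hx
    rw [(hderiv x (Ioo_subset_Icc_self hx)).deriv]
    exact hh'_pos x hx
  set g : ℝ → ℝ := fun x => x ^ (α₀ - 1) * (1 - x) ^ (β₀ - 1) * f x with hgdef
  set F : ℕ → ℝ → ℝ := fun n x => g x * Real.exp (-(n:ℝ) * h x) with hFdef
  have hg_int : IntegrableOn g (Ioo (0:ℝ) 1) := main_integrable hα hβ hf_cont
  have hFc : ∀ n : ℕ, IntegrableOn (F n) (Ioo (0:ℝ) 1) := by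
    intro n
    have hcont : ContinuousOn (fun x => f x * Real.exp (-(n:ℝ) * h x)) (Icc (0:ℝ) 1) :=
      hf_cont.mul (Real.continuous_exp.comp_continuousOn (continuousOn_const.mul hh_cont))
    have := main_integrable hα hβ hcont
    simpa [hFdef, hgdef, mul_assoc] using this
  have hgpos : ∀ x ∈ Ioo (0:ℝ) 1, 0 < g x := by
    intro x hx
    have h1 : 0 < x ^ (α₀ - 1) := Real.rpow_pos_of_pos hx.1 _
    have h2 : 0 < (1-x) ^ (β₀ - 1) := Real.rpow_pos_of_pos (by linarith [hx.2]) _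
    exact mul_pos (mul_pos h1 h2) (hf_pos x (Ioo_subset_Icc_self hx))
  have hFpos : ∀ (n : ℕ), ∀ x ∈ Ioo (0:ℝ) 1, 0 < F n x := fun n x hx =>
    mul_pos (hgpos x hx) (Real.exp_pos _)
  have hD : ∀ n : ℕ, 0 < ∫ x in Ioo (0:ℝ) 1, F n x := fun n =>
    setIntegral_pos_aux one_pos (hFc n) (hFpos n)
  intro ε hε
  rcases le_or_gt 1 ε with h1ε | hε1
  · have heq : ∀ n : ℕ, (1:ℝ) =
        (∫ x in Ioo (0:ℝ) (min ε 1), F n x) / (∫ x in Ioo (0:ℝ) 1, F n x) := by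
      intro n
      rw [min_eq_right h1ε]
      exact (div_self (hD n).ne').symm
    exact Tendsto.congr heq tendsto_const_nhds
  · simp only [min_eq_left hε1.le]
    set δ : ℝ := ε/2 with hδdef
    have hδ0 : 0 < δ := by positivity
    have hδε : δ < ε := by simp only [hδdef]; linarith
    have hδ1 : δ < 1 := lt_trans hδε hε1
    have hεIcc : ε ∈ Icc (0:ℝ) 1 := ⟨hε.le, hε1.le⟩
    have hδIcc : δ ∈ Icc (0:ℝ) 1 := ⟨hδ0.le, hδ1.le⟩
    have hhδε : h δ < h ε := hmono hδIcc hεIcc hδε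
    set C : ℝ := ∫ x in Ioo ε 1, g x with hCdef
    set c : ℝ := ∫ x in Ioo (0:ℝ) δ, g x with hcdef
    have hsub1 : Ioo (0:ℝ) δ ⊆ Ioo (0:ℝ) 1 := Ioo_subset_Ioo le_rfl hδ1.le
    have hsub2 : Ioo ε 1 ⊆ Ioo (0:ℝ) 1 := Ioo_subset_Ioo hε.le le_rfl
    have hc : 0 < c := setIntegral_pos_aux hδ0 (hg_int.mono_set hsub1)
      (fun x hx => hgpos x (hsub1 hx))
    have hC : 0 ≤ C := setIntegral_nonneg measurableSet_Ioo
      (fun x hx => (hgpos x (hsub2 hx)).le)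
    have hRle : ∀ n : ℕ, (∫ x in Ioo ε 1, F n x) ≤ C * Real.exp (-(n:ℝ) * h ε) := by
      intro n
      have hint1 : IntegrableOn (F n) (Ioo ε 1) := (hFc n).mono_set hsub2
      have hint2 : IntegrableOn (fun x => g x * Real.exp (-(n:ℝ) * h ε)) (Ioo ε 1) :=
        (hg_int.mono_set hsub2).mul_const _
      have hle : ∀ x ∈ Ioo ε 1, F n x ≤ g x * Real.exp (-(n:ℝ) * h ε) := by
        intro x hx
        have hx1 : x ∈ Icc (0:ℝ) 1 := ⟨(lt_trans hε hx.1).le, hx.2.le⟩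
        have hhx : h ε ≤ h x := (hmono hεIcc hx1 hx.1).le
        have : (-(n:ℝ)) * h x ≤ (-(n:ℝ)) * h ε := by
          have hn : (0:ℝ) ≤ (n:ℝ) := Nat.cast_nonneg n
          nlinarith
        exact mul_le_mul_of_nonneg_left (Real.exp_le_exp.mpr this) (hgpos x (hsub2 hx)).le
      calc (∫ x in Ioo ε 1, F n x) ≤ ∫ x in Ioo ε 1, g x * Real.exp (-(n:ℝ) * h ε) :=
            setIntegral_mono_on hint1 hint2 measurableSet_Ioo hle
        _ = C * Real.exp (-(n:ℝ) * h ε) := by rw [integral_mul_const]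
    have hDge : ∀ n : ℕ, c * Real.exp (-(n:ℝ) * h δ) ≤ ∫ x in Ioo (0:ℝ) 1, F n x := by
      intro n
      have hint1 : IntegrableOn (F n) (Ioo (0:ℝ) δ) := (hFc n).mono_set hsub1
      have hint2 : IntegrableOn (fun x => g x * Real.exp (-(n:ℝ) * h δ)) (Ioo (0:ℝ) δ) :=
        (hg_int.mono_set hsub1).mul_const _
      have hle : ∀ x ∈ Ioo (0:ℝ) δ, g x * Real.exp (-(n:ℝ) * h δ) ≤ F n x := by
        intro x hx
        have hx1 : x ∈ Icc (0:ℝ) 1 := ⟨hx.1.le, (lt_trans hx.2 hδ1).le⟩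
        have hhx : h x ≤ h δ := (hmono hx1 hδIcc hx.2).le
        have : (-(n:ℝ)) * h δ ≤ (-(n:ℝ)) * h x := by
          have hn : (0:ℝ) ≤ (n:ℝ) := Nat.cast_nonneg n
          nlinarith
        exact mul_le_mul_of_nonneg_left (Real.exp_le_exp.mpr this) (hgpos x (hsub1 hx)).le
      have hnn : 0 ≤ᵐ[volume.restrict (Ioo (0:ℝ) 1)] F n :=
        (ae_restrict_iff' measurableSet_Ioo).mpr
          (Eventually.of_forall (fun x hx => (hFpos n x hx).le))
      calc c * Real.exp (-(n:ℝ) * h δ)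
          = ∫ x in Ioo (0:ℝ) δ, g x * Real.exp (-(n:ℝ) * h δ) := by rw [integral_mul_const]
        _ ≤ ∫ x in Ioo (0:ℝ) δ, F n x := setIntegral_mono_on hint2 hint1 measurableSet_Ioo hle
        _ ≤ ∫ x in Ioo (0:ℝ) 1, F n x :=
            setIntegral_mono_set (hFc n) hnn (HasSubset.Subset.eventuallyLE hsub1)
    have hsplit : ∀ n : ℕ, (∫ x in Ioo (0:ℝ) 1, F n x)
        = (∫ x in Ioo (0:ℝ) ε, F n x) + ∫ x in Ioo ε 1, F n x := by
      intro n
      have hdisj : Disjoint (Ioc (0:ℝ) ε) (Ioo ε 1) := by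
        rw [Set.disjoint_left]
        rintro x hx hx'
        exact absurd hx.2 (not_le.mpr hx'.1)
      have hintIoc : IntegrableOn (F n) (Ioc (0:ℝ) ε) :=
        (hFc n).mono_set (fun x hx => ⟨hx.1, lt_of_le_of_lt hx.2 hε1⟩)
      have hintIoo : IntegrableOn (F n) (Ioo ε 1) := (hFc n).mono_set hsub2
      rw [← Ioc_union_Ioo_eq_Ioo hε.le hε1,
        setIntegral_union hdisj measurableSet_Ioo hintIoc hintIoo]
      congr 1
      exact (setIntegral_congr_set Ioo_ae_eq_Ioc).symm
    set q : ℝ := Real.exp (h δ - h ε) with hqdef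
    have hq0 : 0 ≤ q := (Real.exp_pos _).le
    have hq1 : q < 1 := Real.exp_lt_one_iff.mpr (by linarith)
    have hbound : ∀ n : ℕ,
        (∫ x in Ioo ε 1, F n x) / (∫ x in Ioo (0:ℝ) 1, F n x) ≤ (C / c) * q ^ n := by
      intro n
      have hdpos : 0 < c * Real.exp (-(n:ℝ) * h δ) := mul_pos hc (Real.exp_pos _)
      have h1 : (∫ x in Ioo ε 1, F n x) / (∫ x in Ioo (0:ℝ) 1, F n x)
          ≤ (C * Real.exp (-(n:ℝ) * h ε)) / (c * Real.exp (-(n:ℝ) * h δ)) :=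
        div_le_div₀ (mul_nonneg hC (Real.exp_pos _).le) (hRle n) hdpos (hDge n)
      refine h1.trans_eq ?_
      have hexp : Real.exp (-(n:ℝ) * h ε) / Real.exp (-(n:ℝ) * h δ) = q ^ n := by
        rw [← Real.exp_sub, show -(n:ℝ) * h ε - -(n:ℝ) * h δ = (n:ℝ) * (h δ - h ε) by ring,
          Real.exp_nat_mul]
      rw [mul_div_mul_comm, hexp]
    have hzero : Tendsto
        (fun n : ℕ => (∫ x in Ioo ε 1, F n x) / (∫ x in Ioo (0:ℝ) 1, F n x))
        atTop (nhds 0) := by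
      refine squeeze_zero (fun n => div_nonneg ?_ (hD n).le) hbound ?_
      · exact setIntegral_nonneg measurableSet_Ioo (fun x hx => (hFpos n x (hsub2 hx)).le)
      · simpa using (tendsto_pow_atTop_nhds_zero_of_lt_one hq0 hq1).const_mul (C / c)
    have hfin : Tendsto
        (fun n : ℕ => 1 - (∫ x in Ioo ε 1, F n x) / (∫ x in Ioo (0:ℝ) 1, F n x))
        atTop (nhds 1) := by
      simpa using tendsto_const_nhds.sub hzero
    refine hfin.congr (fun n => ?_)
    have hD' : (∫ x in Ioo (0:ℝ) 1, F n x) ≠ 0 := (hD n).ne'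
    rw [eq_div_iff hD', sub_mul, one_mul, div_mul_cancel₀ _ hD', hsplit n]
    ring
end
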